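/- arXiv:0812.0804 — 3 statements merged into one kernel-verified Lean document; each statement's English description precedes it below -/
import Mathlib

section
/- Multiplicativity of the quantum dimension under fusion: for all words x, y ∈ I, dim_q(x)·dim_q(y) = Σ_{z ∈ I} m(z; x, y)·dim_q(z), the sum having only finitely many nonzero terms; the same identity holds with dim_q replaced by dim₁ throughout. -/
open Filter Topology MeasureTheory

/-- Words in the free monoid on two letters `α = true`, `β = false`. -/
abbrev Word := List Bool

/-- Conjugation: reverse the word and swap the two letters. -/
def wconj (x : Word) : Word := x.reverse.map (fun b => !b)

/-- Fusion multiplicity `m(z; x, y)`: the number of triples `(x₀, w, y₀)` with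
`x = x₀w`, `y = w̄y₀` and `z = x₀y₀`. -/
def fm (x y z : Word) : ℕ :=
  ((Finset.range (x.length + 1)).filter (fun k =>
    wconj (x.drop k) <+: y ∧ z = x.take k ++ y.drop (x.length - k))).card

/-- Maximal alternating blocks of a word. -/
def blocks : Word → List Word
  | [] => []
  | a :: rest =>
    match blocks rest with
    | [] => [[a]]
    | b :: bs => if b.head? = some a then [a] :: b :: bs else (a :: b) :: bs

/-- The quantum integer `[n]_q = (qⁿ - q⁻ⁿ)/(q - q⁻¹)`. -/
noncomputable def qnum (q : ℝ) (n : ℕ) : ℝ := (q ^ n - q⁻¹ ^ n) / (q - q⁻¹)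

/-- Quantum dimension `dim_q(x) = ∏ᵢ [|xᵢ|+1]_q` over the maximal alternating blocks. -/
noncomputable def dimq (q : ℝ) (x : Word) : ℝ :=
  ((blocks x).map (fun b => qnum q (b.length + 1))).prod

/-- Classical dimension `dim₁(x) = ∏ᵢ (|xᵢ|+1)` over the maximal alternating blocks. -/
def dim1 (x : Word) : ℕ := ((blocks x).map (fun b => b.length + 1)).prod

/-! ### Auxiliary development -/

lemma blocks_cons (a : Bool) (rest : Word) : blocks (a :: rest) = match blocks rest with
    | [] => [[a]]
    | b :: bs => if b.head? = some a then [a] :: b :: bs else (a :: b) :: bs := rfl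

lemma wconj_cons (a : Bool) (x : Word) : wconj (a :: x) = wconj x ++ [!a] := by simp [wconj]

lemma wconj_length (x : Word) : (wconj x).length = x.length := by simp [wconj]

lemma prefix_snoc_iff (v : Word) (b : Bool) (y : Word) :
    v ++ [b] <+: y ↔ v <+: y ∧ (y.drop v.length).head? = some b := by
  constructor
  · rintro ⟨t, ht⟩
    rw [List.append_assoc] at ht
    refine ⟨⟨[b] ++ t, ht⟩, ?_⟩
    rw [← ht, List.drop_left]
    rfl
  · rintro ⟨⟨t, ht⟩, hh⟩
    rw [← ht, List.drop_left] at hh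
    cases t with
    | nil => simp at hh
    | cons c t' =>
      obtain rfl : c = b := by simpa using hh
      exact ⟨t', by rw [← ht]; simp⟩

section AbstractDim

variable {R : Type*} [CommSemiring R]

/-- Abstract block-product dimension function with block weight `f`. -/
def DD (f : ℕ → R) (x : Word) : R := ((blocks x).map (fun b => f b.length)).prod

/-- Left fold computing `DD`; `p` is the last letter of the current block and `n` its length. -/
def Daux (f : ℕ → R) : Bool → ℕ → Word → R
  | _, n, [] => f n
  | p, n, a :: x => if a = p then f n * Daux f a 1 x else Daux f a (n+1) x

lemma DD_nil (f : ℕ → R) : DD f [] = 1 := rfl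

lemma daux_char (f : ℕ → R) : ∀ (x : Word) (p : Bool) (n : ℕ),
    (blocks x = [] → Daux f p n x = f n) ∧
    (∀ b bs, blocks x = b :: bs →
      (b.head? = some p → Daux f p n x = f n * DD f x) ∧
      (¬ (b.head? = some p) →
        Daux f p n x = f (n + b.length) * ((bs.map (fun u => f u.length)).prod))) := by
  intro x
  induction x with
  | nil =>
    intro p n
    refine ⟨fun _ => rfl, fun b bs h => by simp [blocks] at h⟩
  | cons a x' ih =>
    intro p n
    have hd : Daux f p n (a :: x') = if a = p then f n * Daux f a 1 x' else Daux f a (n+1) x' := rfl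
    cases hbx : blocks x' with
    | nil =>
      have hb : blocks (a :: x') = [[a]] := by rw [blocks_cons, hbx]
      refine ⟨fun h => by rw [hb] at h; exact absurd h (by simp), ?_⟩
      rintro b bs h
      rw [hb] at h
      injection h with h1 h2
      subst h1; subst h2
      constructor
      · intro hhp
        have hap : a = p := by simpa using hhp
        rw [hd, if_pos hap, (ih a 1).1 hbx]
        simp [DD, hb]
      · intro hhp
        have hap : ¬ a = p := by simpa using hhp
        rw [hd, if_neg hap, (ih a (n+1)).1 hbx]
        simp
    | cons c cs =>
      have hb' : blocks (a :: x') =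
          if c.head? = some a then [a] :: c :: cs else (a :: c) :: cs := by
        rw [blocks_cons, hbx]
      by_cases hca : c.head? = some a
      · have hb : blocks (a :: x') = [a] :: c :: cs := by rw [hb', if_pos hca]
        refine ⟨fun h => by rw [hb] at h; exact absurd h (by simp), ?_⟩
        rintro b bs h
        rw [hb] at h
        injection h with h1 h2
        subst h1; subst h2
        constructor
        · intro hhp
          have hap : a = p := by simpa using hhp
          rw [hd, if_pos hap, ((ih a 1).2 c cs hbx).1 hca]
          simp [DD, hb, hbx, mul_assoc]
        · intro hhp
          have hap : ¬ a = p := by simpa using hhp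
          rw [hd, if_neg hap, ((ih a (n+1)).2 c cs hbx).1 hca]
          simp [DD, hbx]
      · have hb : blocks (a :: x') = (a :: c) :: cs := by rw [hb', if_neg hca]
        refine ⟨fun h => by rw [hb] at h; exact absurd h (by simp), ?_⟩
        rintro b bs h
        rw [hb] at h
        injection h with h1 h2
        subst h1; subst h2
        constructor
        · intro hhp
          have hap : a = p := by simpa using hhp
          rw [hd, if_pos hap, ((ih a 1).2 c cs hbx).2 hca]
          simp [DD, hb, Nat.add_comm 1 c.length, mul_assoc]
        · intro hhp
          have hap : ¬ a = p := by simpa using hhp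
          rw [hd, if_neg hap, ((ih a (n+1)).2 c cs hbx).2 hca]
          rw [show n + 1 + c.length = n + (c.length + 1) from by omega]
          simp

lemma char0 (f : ℕ → R) (b : Bool) (y : Word) : DD f (b :: y) = Daux f b 1 y := by
  cases hbx : blocks y with
  | nil =>
    rw [(daux_char f y b 1).1 hbx]
    have hb : blocks (b :: y) = [[b]] := by rw [blocks_cons, hbx]
    simp [DD, hb]
  | cons c cs =>
    by_cases hcb : c.head? = some b
    · rw [((daux_char f y b 1).2 c cs hbx).1 hcb]
      have hb : blocks (b :: y) = [b] :: c :: cs := by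
        rw [blocks_cons, hbx]; dsimp only; rw [if_pos hcb]
      simp [DD, hb, hbx]
    · rw [((daux_char f y b 1).2 c cs hbx).2 hcb]
      have hb : blocks (b :: y) = (b :: c) :: cs := by
        rw [blocks_cons, hbx]; dsimp only; rw [if_neg hcb]
      simp [DD, hb, Nat.add_comm 1 c.length]

lemma claimC (f : ℕ → R) (hc : ∀ a b c : R, a + c = b + c → a = b)
    (hf0 : f 0 = 1) (hf : ∀ m n, f (m+1) * f (n+1) = f (m+n+2) + f m * f n) :
    ∀ (y : Word) (a : Bool) (n : ℕ),
    f (n+1) * DD f y = Daux f a (n+1) y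
      + (if y.head? = some (!a) then f n * DD f y.tail else 0) := by
  intro y
  induction y with
  | nil => intro a n; simp [DD_nil, show Daux f a (n+1) [] = f (n+1) from rfl]
  | cons b y' ih =>
    intro a n
    by_cases hba : b = !a
    · have hbne : ¬ (b = a) := by revert hba; cases a <;> cases b <;> decide
      have hd : Daux f a (n+1) (b :: y') = Daux f b (n+2) y' := by
        show (if b = a then _ else _) = _
        rw [if_neg hbne]
      rw [hd, char0]
      have hcond : (some b = some (!a)) := by rw [hba]
      rw [if_pos (by simpa using hcond : (b :: y').head? = some (!a))]
      show f (n+1) * Daux f b 1 y' = Daux f b (n+2) y' + f n * DD f y'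
      have h1 := ih b 0
      have h2 := ih b (n+1)
      norm_num at h1 h2
      have hf' := hf n 0
      norm_num at hf'
      set C₀ : R := if y'.head? = some (!b) then f 0 * DD f y'.tail else 0 with hC0
      set C₂ : R := if y'.head? = some (!b) then f (n+1) * DD f y'.tail else 0 with hC2
      have hC : C₂ = f (n+1) * C₀ := by
        by_cases h : y'.head? = some (!b) <;> simp [hC0, hC2, h, hf0]
      apply hc _ _ (f (n+1) * C₀)
      calc f (n+1) * Daux f b 1 y' + f (n+1) * C₀
          = f (n+1) * (Daux f b 1 y' + C₀) := (mul_add _ _ _).symm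
        _ = f (n+1) * (f 1 * DD f y') := by rw [← h1]
        _ = (f (n+1) * f 1) * DD f y' := by ring
        _ = (f (n+2) + f n * f 0) * DD f y' := by rw [hf']
        _ = f (n+2) * DD f y' + f n * DD f y' := by rw [hf0]; ring
        _ = (Daux f b (n+2) y' + C₂) + f n * DD f y' := by rw [← h2]
        _ = Daux f b (n+2) y' + f n * DD f y' + f (n+1) * C₀ := by rw [hC]; ring
    · have hbe : b = a := by revert hba; cases a <;> cases b <;> decide
      subst hbe
      have hd : Daux f b (n+1) (b :: y') = f (n+1) * Daux f b 1 y' := by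
        show (if b = b then _ else _) = _
        rw [if_pos rfl]
      rw [hd, char0, if_neg (by simp : ¬ ((b :: y').head? = some (!b))), add_zero]

lemma M2 (f : ℕ → R) (hc : ∀ a b c : R, a + c = b + c → a = b)
    (hf0 : f 0 = 1) (hf : ∀ m n, f (m+1) * f (n+1) = f (m+n+2) + f m * f n) (y : Word) :
    ∀ (x : Word) (a : Bool) (n : ℕ),
    Daux f a (n+1) x * DD f y =
      (if wconj (a :: x) <+: y then f n * DD f (y.drop (x.length + 1)) else 0)
      + ∑ k ∈ (Finset.range (x.length + 1)).filter (fun k => wconj (x.drop k) <+: y),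
          Daux f a (n+1) (x.take k ++ y.drop (x.length - k)) := by
  intro x
  induction x with
  | nil =>
    intro a n
    simp only [List.length_nil, Nat.zero_add]
    rw [Finset.sum_filter, Finset.sum_range_one]
    have hiff : ([!a] <+: y) ↔ y.head? = some (!a) := by
      simpa using prefix_snoc_iff [] (!a) y
    have h0 : wconj ([] : Word) <+: y := by simp [wconj]
    rw [if_pos (by simpa [wconj] using h0 : wconj (List.drop 0 ([] : Word)) <+: y)]
    simp only [List.take_nil, List.nil_append, List.length_nil, Nat.sub_zero, List.drop_zero,
      Nat.zero_add]
    rw [show Daux f a (n+1) ([] : Word) = f (n+1) from rfl,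
      claimC f hc hf0 hf y a n]
    rw [add_comm]
    congr 1
    rw [wconj_cons]
    simp only [wconj, List.reverse_nil, List.map_nil, List.nil_append, List.drop_one]
    rw [if_congr hiff rfl rfl]
  | cons c x'' ih =>
    intro a n
    simp only [List.length_cons]
    have hsplit :
        ∑ k ∈ (Finset.range (x''.length + 1 + 1)).filter
            (fun k => wconj ((c :: x'').drop k) <+: y),
          Daux f a (n+1) ((c :: x'').take k ++ y.drop (x''.length + 1 - k))
        = (if wconj (c :: x'') <+: y then Daux f a (n+1) (y.drop (x''.length + 1)) else 0)
          + ∑ j ∈ (Finset.range (x''.length + 1)).filter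
              (fun j => wconj (x''.drop j) <+: y),
            Daux f a (n+1) (c :: (x''.take j ++ y.drop (x''.length - j))) := by
      rw [Finset.sum_filter, Finset.sum_range_succ']
      rw [add_comm]
      congr 1
      rw [Finset.sum_filter]
      refine Finset.sum_congr rfl fun j _ => ?_
      simp only [List.drop_succ_cons, List.take_succ_cons, Nat.add_sub_add_right,
        List.cons_append]
    rw [hsplit]
    have hres : (if wconj (c :: x'') <+: y then f (n+1) * DD f (y.drop (x''.length + 1)) else 0)
        = (if wconj (a :: c :: x'') <+: y then f n * DD f (y.drop (x''.length + 1 + 1)) else 0)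
          + (if wconj (c :: x'') <+: y then Daux f a (n+1) (y.drop (x''.length + 1)) else 0) := by
      by_cases hP : wconj (c :: x'') <+: y
      · have hQ : (wconj (a :: c :: x'') <+: y) ↔
            (y.drop (x''.length + 1)).head? = some (!a) := by
          rw [wconj_cons, prefix_snoc_iff, wconj_length]
          simp [hP]
        rw [if_pos hP, if_pos hP, claimC f hc hf0 hf (y.drop (x''.length + 1)) a n,
          List.tail_drop]
        simp only [hQ]
        rw [add_comm]
      · have hQn : ¬ (wconj (a :: c :: x'') <+: y) := by
          intro h; apply hP
          rw [wconj_cons] at h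
          exact ((prefix_snoc_iff _ _ _).1 h).1
        simp [hP, hQn]
    by_cases hca : c = a
    · subst hca
      have hd : Daux f c (n+1) (c :: x'') = f (n+1) * Daux f c 1 x'' := by
        show (if c = c then _ else _) = _
        rw [if_pos rfl]
      have hsummand : ∀ w : Word, Daux f c (n+1) (c :: w) = f (n+1) * Daux f c 1 w := by
        intro w
        show (if c = c then _ else _) = _
        rw [if_pos rfl]
      have ih0 := ih c 0
      norm_num at ih0
      rw [hd, mul_assoc, ih0, mul_add, Finset.mul_sum]
      have hS : ∑ j ∈ (Finset.range (x''.length + 1)).filter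
            (fun j => wconj (x''.drop j) <+: y),
          f (n+1) * Daux f c 1 (x''.take j ++ y.drop (x''.length - j))
          = ∑ j ∈ (Finset.range (x''.length + 1)).filter
              (fun j => wconj (x''.drop j) <+: y),
            Daux f c (n+1) (c :: (x''.take j ++ y.drop (x''.length - j))) :=
        Finset.sum_congr rfl fun j _ => (hsummand _).symm
      rw [hS]
      have hA : f (n+1) * (if wconj (c :: x'') <+: y
            then f 0 * DD f (y.drop (x''.length + 1)) else 0)
          = (if wconj (c :: x'') <+: y then f (n+1) * DD f (y.drop (x''.length + 1)) else 0) := by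
        rw [mul_ite, mul_zero, hf0]
        ring_nf
      rw [hA, hres, add_assoc]
    · have hd : Daux f a (n+1) (c :: x'') = Daux f c (n+1+1) x'' := by
        show (if c = a then _ else _) = _
        rw [if_neg hca]
      have hsummand : ∀ w : Word, Daux f a (n+1) (c :: w) = Daux f c (n+1+1) w := by
        intro w
        show (if c = a then _ else _) = _
        rw [if_neg hca]
      have ih1 := ih c (n+1)
      rw [hd, ih1]
      have hS : ∑ j ∈ (Finset.range (x''.length + 1)).filter
            (fun j => wconj (x''.drop j) <+: y),
          Daux f c (n+1+1) (x''.take j ++ y.drop (x''.length - j))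
          = ∑ j ∈ (Finset.range (x''.length + 1)).filter
              (fun j => wconj (x''.drop j) <+: y),
            Daux f a (n+1) (c :: (x''.take j ++ y.drop (x''.length - j))) :=
        Finset.sum_congr rfl fun j _ => (hsummand _).symm
      rw [hS, hres, add_assoc]

lemma mainDD (f : ℕ → R) (hc : ∀ a b c : R, a + c = b + c → a = b)
    (hf0 : f 0 = 1) (hf : ∀ m n, f (m+1) * f (n+1) = f (m+n+2) + f m * f n)
    (x y : Word) :
    DD f x * DD f y =
      ∑ k ∈ (Finset.range (x.length + 1)).filter (fun k => wconj (x.drop k) <+: y),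
        DD f (x.take k ++ y.drop (x.length - k)) := by
  cases x with
  | nil =>
    rw [Finset.sum_filter]
    simp only [List.length_nil, Nat.zero_add, Finset.sum_range_one]
    simp [wconj, DD_nil]
  | cons c x' =>
    simp only [List.length_cons]
    have hsplit :
        ∑ k ∈ (Finset.range (x'.length + 1 + 1)).filter
            (fun k => wconj ((c :: x').drop k) <+: y),
          DD f ((c :: x').take k ++ y.drop (x'.length + 1 - k))
        = (if wconj (c :: x') <+: y then DD f (y.drop (x'.length + 1)) else 0)
          + ∑ j ∈ (Finset.range (x'.length + 1)).filter
              (fun j => wconj (x'.drop j) <+: y),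
            DD f (c :: (x'.take j ++ y.drop (x'.length - j))) := by
      rw [Finset.sum_filter, Finset.sum_range_succ']
      rw [add_comm]
      congr 1
      rw [Finset.sum_filter]
      refine Finset.sum_congr rfl fun j _ => ?_
      simp only [List.drop_succ_cons, List.take_succ_cons, Nat.add_sub_add_right,
        List.cons_append]
    rw [hsplit, char0]
    have hM := M2 f hc hf0 hf y x' c 0
    norm_num at hM
    rw [hM]
    congr 1
    · by_cases hP : wconj (c :: x') <+: y
      · rw [if_pos hP, if_pos hP, hf0, one_mul]
      · rw [if_neg hP, if_neg hP]
    · exact Finset.sum_congr rfl fun j _ => (char0 f c _).symm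

lemma fm_support_sub (x y : Word) :
    {z : Word | fm x y z ≠ 0} ⊆
      ↑(((Finset.range (x.length + 1)).filter (fun k => wconj (x.drop k) <+: y)).image
        (fun k => x.take k ++ y.drop (x.length - k))) := by
  intro z hz
  obtain ⟨k, hk⟩ := Finset.card_ne_zero.mp hz
  rw [Finset.mem_filter, Finset.mem_range] at hk
  obtain ⟨hkr, hcond, hzeq⟩ := hk
  exact Finset.mem_coe.mpr (Finset.mem_image.mpr
    ⟨k, Finset.mem_filter.mpr ⟨Finset.mem_range.mpr hkr, hcond⟩, hzeq.symm⟩)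

lemma fm_finite (x y : Word) : {z : Word | fm x y z ≠ 0}.Finite :=
  Set.Finite.subset (Finset.finite_toSet _) (fm_support_sub x y)

theorem abstractMain (f : ℕ → R) (hc : ∀ a b c : R, a + c = b + c → a = b)
    (hf0 : f 0 = 1) (hf : ∀ m n, f (m+1) * f (n+1) = f (m+n+2) + f m * f n)
    (x y : Word) :
    DD f x * DD f y = ∑ᶠ z : Word, (fm x y z : R) * DD f z := by
  classical
  set T := (Finset.range (x.length + 1)).filter (fun k => wconj (x.drop k) <+: y) with hT
  set zf : ℕ → Word := fun k => x.take k ++ y.drop (x.length - k) with hzf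
  set Z := T.image zf with hZ
  have hsupp : (Function.support fun z => (fm x y z : R) * DD f z) ⊆ ↑Z := by
    intro z hz
    have hfm : fm x y z ≠ 0 := by
      intro h
      apply hz
      simp [h]
    exact fm_support_sub x y hfm
  have h1 : ∑ᶠ z : Word, (fm x y z : R) * DD f z = ∑ z ∈ Z, (fm x y z : R) * DD f z :=
    finsum_eq_finset_sum_of_support_subset _ hsupp
  have h2 : ∀ z : Word, (fm x y z : R) * DD f z
      = ∑ k ∈ T.filter (fun k => zf k = z), DD f (zf k) := by
    intro z
    have hcard : fm x y z = (T.filter (fun k => zf k = z)).card := by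
      rw [fm, hT, Finset.filter_filter]
      congr 1
      apply Finset.filter_congr
      intro k _
      simp [eq_comm, hzf]
    rw [hcard, Finset.sum_congr rfl (fun k hk => show DD f (zf k) = DD f z from by
        rw [(Finset.mem_filter.mp hk).2]), Finset.sum_const, nsmul_eq_mul]
  rw [h1, Finset.sum_congr rfl fun z _ => h2 z,
    Finset.sum_fiberwise_of_maps_to (fun k hk => Finset.mem_image_of_mem zf hk)]
  exact mainDD f hc hf0 hf x y

end AbstractDim

/-! ### Quantum integer identities -/

lemma qkey (q : ℝ) (h1 : q * q⁻¹ = 1) (a b : ℕ) :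
    (q^(a+1) - q⁻¹^(a+1)) * (q^(b+1) - q⁻¹^(b+1))
      = (q^(a+b+1) - q⁻¹^(a+b+1)) * (q - q⁻¹) + (q^a - q⁻¹^a) * (q^b - q⁻¹^b) := by
  linear_combination (q^(a+b) + q⁻¹^(a+b) - q^a * q⁻¹^b - q^b * q⁻¹^a) * h1

lemma qnum_mul (q : ℝ) (hq0 : 0 < q) (hq1 : q < 1) (m n : ℕ) :
    qnum q (m+1+1) * qnum q (n+1+1) = qnum q (m+n+2+1) + qnum q (m+1) * qnum q (n+1) := by
  have h1 : q * q⁻¹ = 1 := mul_inv_cancel₀ (ne_of_gt hq0)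
  have hne : q - q⁻¹ ≠ 0 := by intro h; nlinarith
  have e1 : qnum q (m+1+1) * qnum q (n+1+1)
      = ((q^(m+1+1) - q⁻¹^(m+1+1)) * (q^(n+1+1) - q⁻¹^(n+1+1))) / ((q - q⁻¹) * (q - q⁻¹)) :=
    div_mul_div_comm _ _ _ _
  rw [e1, qkey q h1 (m+1) (n+1), show (m+1)+(n+1)+1 = m+n+2+1 by omega, add_div]
  congr 1
  · rw [mul_div_mul_right _ _ hne]
    rfl
  · rw [← div_mul_div_comm]
    rfl

/-- Multiplicativity of the quantum dimension under fusion: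
`dim_q(x)·dim_q(y) = Σ_z m(z; x, y)·dim_q(z)`, the sum having finitely many nonzero
terms, and the same identity for `dim₁`. -/
theorem dimq_multiplicative (q : ℝ) (hq0 : 0 < q) (hq1 : q < 1) (x y : Word) :
    {z : Word | fm x y z ≠ 0}.Finite ∧
    dimq q x * dimq q y = ∑ᶠ z : Word, (fm x y z : ℝ) * dimq q z ∧
    dim1 x * dim1 y = ∑ᶠ z : Word, fm x y z * dim1 z := by
  have h1 : q * q⁻¹ = 1 := mul_inv_cancel₀ (ne_of_gt hq0)
  have hne : q - q⁻¹ ≠ 0 := by intro h; nlinarith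
  refine ⟨fm_finite x y, ?_, ?_⟩
  · have hf0 : (fun k : ℕ => qnum q (k+1)) 0 = 1 := by
      show qnum q (0+1) = 1
      simp only [Nat.zero_add, qnum, pow_one]
      exact div_self hne
    have hdim : ∀ w : Word, dimq q w = DD (fun k : ℕ => qnum q (k+1)) w := fun w => rfl
    have := abstractMain (fun k : ℕ => qnum q (k+1))
      (fun a b c h => by linarith) hf0 (fun m n => qnum_mul q hq0 hq1 m n) x y
    simpa [hdim] using this
  · have hdim : ∀ w : Word, dim1 w = DD (fun k : ℕ => k+1) w := fun w => rfl
    have := abstractMain (R := ℕ) (fun k : ℕ => k+1)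
      (fun a b c h => by omega) rfl (fun m n => by ring) x y
    simpa [hdim, Nat.cast_id] using this
end

section
/- Let x, y ∈ I, let z₁ ∈ I be a nonempty word, and let u ∈ ∂I be an infinite word whose first letter equals the last letter of z₁; set w = z₁u ∈ ∂I. Then for every n ≥ |z₁| one has dim_q(x[w]_n)/dim_q(y[w]_n) = dim_q(xz₁)/dim_q(yz₁); in particular D_w(x, y) = dim_q(xz₁)/dim_q(yz₁). -/
open Filter Topology MeasureTheory

/-- The word `[w]_n` formed by the first `n` letters of an infinite word `w ∈ ∂I`. -/
def bprefix (w : ℕ → Bool) (n : ℕ) : Word := (List.range n).map w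

/-- `D_w(x, y) = lim_n dim_q(x[w]_n)/dim_q(y[w]_n)` for `x, y ∈ I` and `w ∈ ∂I`. -/
noncomputable def Dw (q : ℝ) (x y : Word) (w : ℕ → Bool) : ℝ :=
  limUnder atTop (fun n => dimq q (x ++ bprefix w n) / dimq q (y ++ bprefix w n))

/-- Concatenation of a finite word with an infinite word. -/
def bcat (z : Word) (u : ℕ → Bool) : ℕ → Bool :=
  fun n => if n < z.length then z.getD n false else u (n - z.length)

/-- The strictly alternating infinite word starting with the letter `a`. -/
def walt (a : Bool) : ℕ → Bool := fun n => if n % 2 = 0 then a else !a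

/-- `(x|w)`: the length of the longest common prefix of a finite word `x` and an
infinite word `w`. -/
def cpb : Word → (ℕ → Bool) → ℕ
  | [], _ => 0
  | a :: xs, w => if a = w 0 then cpb xs (fun n => w (n + 1)) + 1 else 0

/-!
Because `u` starts with the last letter of `z₁`, the junction between `z₁` and `u` is a block
boundary: for `n ≥ |z₁|` the blocks of `x [w]_n = x z₁ [u]_{n - |z₁|}` are those of `x z₁`
followed by those of `[u]_{n - |z₁|}`. So `dim_q` factors there, the positive factor
`dim_q [u]_{n - |z₁|}` cancels from the ratio, and the ratio is eventually constant.
-/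

theorem exists_blocks_cons_head? (a : Bool) (w : Word) :
    ∃ b bs, blocks (a :: w) = b :: bs ∧ b.head? = some a := by
  rw [blocks.eq_2]
  rcases blocks w with _ | ⟨b, bs⟩
  · exact ⟨[a], [], rfl, rfl⟩
  · by_cases h : b.head? = some a
    · exact ⟨[a], b :: bs, by simp [h], rfl⟩
    · exact ⟨a :: b, bs, by simp [h], rfl⟩

theorem blocks_append_of_getLast?_eq_head? {a b : Word} (h : a.getLast? = b.head?) :
    blocks (a ++ b) = blocks a ++ blocks b := by
  induction a with
  | nil => simp [List.head?_eq_none_iff.mp h.symm, blocks.eq_1]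
  | cons c a ih =>
    rcases a with _ | ⟨d, a⟩
    · obtain ⟨b', rfl⟩ : ∃ b', b = c :: b' := by
        rcases b with _ | ⟨e, b'⟩ <;> simp_all
      obtain ⟨p, ps, hp, hph⟩ := exists_blocks_cons_head? c b'
      rw [List.singleton_append, blocks.eq_2, hp]
      simp [hph, blocks.eq_2, blocks.eq_1]
    · obtain ⟨p, ps, hp, hph⟩ := exists_blocks_cons_head? d a
      rw [List.cons_append, blocks.eq_2, ih (by simpa using h), hp, blocks.eq_2 c, hp]
      simp only [List.cons_append]
      split_ifs <;> rfl

theorem dimq_append_of_getLast?_eq_head? (q : ℝ) {a b : Word} (h : a.getLast? = b.head?) :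
    dimq q (a ++ b) = dimq q a * dimq q b := by
  rw [dimq, blocks_append_of_getLast?_eq_head? h, List.map_append, List.prod_append, dimq, dimq]

theorem qnum_succ_pos {q : ℝ} (hq0 : 0 < q) (hq1 : q < 1) (n : ℕ) : 0 < qnum q (n + 1) := by
  have hq : q < q⁻¹ := hq1.trans (one_lt_inv₀ hq0 |>.mpr hq1)
  have hpow : q ^ (n + 1) < q⁻¹ ^ (n + 1) := pow_lt_pow_left₀ hq hq0.le n.succ_ne_zero
  exact div_pos_of_neg_of_neg (by linarith) (by linarith)

theorem dimq_pos {q : ℝ} (hq0 : 0 < q) (hq1 : q < 1) (w : Word) : 0 < dimq q w :=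
  List.prod_pos fun _ hr => by
    obtain ⟨b, -, rfl⟩ := List.mem_map.mp hr
    exact qnum_succ_pos hq0 hq1 _

theorem bprefix_bcat_of_length_le (z : Word) (u : ℕ → Bool) {n : ℕ} (hn : z.length ≤ n) :
    bprefix (bcat z u) n = z ++ bprefix u (n - z.length) := by
  refine List.ext_getElem (by simp [bprefix]; omega) fun i _ _ => ?_
  simp only [bprefix, List.getElem_map, List.getElem_range, bcat]
  by_cases hi : i < z.length
  · rw [List.getElem_append_left hi, if_pos hi, List.getD_eq_getElem z false hi]
  · rw [List.getElem_append_right (by omega), if_neg hi]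
    simp

theorem head?_bprefix (u : ℕ → Bool) {m : ℕ} (hm : m ≠ 0) : (bprefix u m).head? = some (u 0) := by
  obtain ⟨k, rfl⟩ := Nat.exists_eq_succ_of_ne_zero hm
  simp [bprefix, List.range_succ_eq_map]

theorem dimq_append_bprefix_bcat (q : ℝ) (v : Word) {z : Word} {u : ℕ → Bool}
    (hu : z.getLast? = some (u 0)) {n : ℕ} (hn : z.length ≤ n) :
    dimq q (v ++ bprefix (bcat z u) n) = dimq q (v ++ z) * dimq q (bprefix u (n - z.length)) := by
  rw [bprefix_bcat_of_length_le z u hn, ← List.append_assoc]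
  by_cases hm : n - z.length = 0
  · simp [hm, bprefix, dimq, blocks]
  · refine dimq_append_of_getLast?_eq_head? q ?_
    rw [head?_bprefix u hm, List.getLast?_append, hu]
    rfl

/-- If `z₁ ∈ I` is nonempty and `u ∈ ∂I` starts with the last letter of
`z₁`, then for `w = z₁u` and all `n ≥ |z₁|`,
`dim_q(x[w]_n)/dim_q(y[w]_n) = dim_q(xz₁)/dim_q(yz₁)`; in particular
`D_w(x, y) = dim_q(xz₁)/dim_q(yz₁)`. -/
theorem Dw_eventually_constant (q : ℝ) (hq0 : 0 < q) (hq1 : q < 1)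
    (x y z₁ : Word) (hz : z₁ ≠ []) (u : ℕ → Bool) (hu : u 0 = z₁.getLast hz) :
    (∀ n : ℕ, z₁.length ≤ n →
      dimq q (x ++ bprefix (bcat z₁ u) n) / dimq q (y ++ bprefix (bcat z₁ u) n) =
        dimq q (x ++ z₁) / dimq q (y ++ z₁)) ∧
    Dw q x y (bcat z₁ u) = dimq q (x ++ z₁) / dimq q (y ++ z₁) := by
  have hlast : z₁.getLast? = some (u 0) := by rw [List.getLast?_eq_some_getLast hz, hu]
  have hconst : ∀ n : ℕ, z₁.length ≤ n →
      dimq q (x ++ bprefix (bcat z₁ u) n) / dimq q (y ++ bprefix (bcat z₁ u) n) =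
        dimq q (x ++ z₁) / dimq q (y ++ z₁) := fun n hn => by
    rw [dimq_append_bprefix_bcat q x hlast hn, dimq_append_bprefix_bcat q y hlast hn,
      mul_div_mul_right _ _ (dimq_pos hq0 hq1 _).ne']
  refine ⟨hconst, Tendsto.limUnder_eq ?_⟩
  exact tendsto_const_nhds.congr' <|
    (eventually_ge_atTop z₁.length).mono fun n hn => (hconst n hn).symm
end

section
/- Let w_α = αβαβ⋯ ∈ ∂I be the strictly alternating infinite word beginning with α. For x ∈ I write x = x₀x₁ where x₁ is the longest alternating suffix of x ending with the letter β (x₁ = ε if no such suffix exists), and similarly y = y₀y₁. Then D_{w_α}(x, y) = (dim_q(x₀)/dim_q(y₀))·q^{|y₁| − |x₁|}. The analogous statement with the roles of α and β interchanged holds for w_β = βαβα⋯. -/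
open Filter Topology MeasureTheory

/-! By maximality of `x₁`, the last letter of `x₀` equals the first letter of `x₁[w]_n`:
otherwise prepending it to `x₁` would give a longer alternating suffix ending in the letter
`w` does not start with. As `x₁[w]_n` is alternating, the blocks of `x[w]_n` are those of `x₀`
followed by the single block `x₁[w]_n`, so `dim_q(x[w]_n) = dim_q(x₀) [|x₁| + n + 1]_q`.
Finally `qᵐ [m]_q → q / (1 - q²) ≠ 0`, hence `[|x₁| + n + 1]_q / [|y₁| + n + 1]_q → q^{|y₁| - |x₁|}`. -/

theorem exists_blocks_cons (a : Bool) (t : Word) : ∃ b bs, blocks (a :: t) = (a :: b) :: bs := by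
  rw [blocks]
  split
  · exact ⟨[], [], rfl⟩
  · split_ifs
    exacts [⟨[], _, rfl⟩, ⟨_, _, rfl⟩]

theorem blocks_of_isChain {c : Word} (hne : c ≠ []) (hc : c.IsChain (· ≠ ·)) : blocks c = [c] := by
  induction c with
  | nil => exact absurd rfl hne
  | cons a t ih =>
    rcases t with _ | ⟨b, t⟩
    · rfl
    · rw [List.isChain_cons_cons] at hc
      rw [blocks, ih (List.cons_ne_nil _ _) hc.2]
      simp [Ne.symm hc.1]

theorem blocks_append {z c : Word} (h : ∀ a ∈ z.getLast?, ∀ b ∈ c.head?, a = b) :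
    blocks (z ++ c) = blocks z ++ blocks c := by
  induction z with
  | nil => rfl
  | cons a z ih =>
    rcases z with _ | ⟨a', z⟩
    · rcases c with _ | ⟨b, c⟩
      · rfl
      · obtain rfl : a = b := h a rfl b rfl
        obtain ⟨b, bs, hb⟩ := exists_blocks_cons a c
        rw [List.singleton_append, blocks, hb]
        simp [blocks]
    · obtain ⟨b, bs, hb⟩ := exists_blocks_cons a' z
      have ih : blocks (a' :: z ++ c) = (a' :: b) :: (bs ++ blocks c) := by
        rw [ih (by simpa using h), hb, List.cons_append]
      rw [List.cons_append, blocks, ih, blocks, hb]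
      dsimp only
      split_ifs <;> rfl

theorem dimq_append_of_isChain (q : ℝ) {z c : Word} (hne : c ≠ []) (hc : c.IsChain (· ≠ ·))
    (h : ∀ a ∈ z.getLast?, ∀ b ∈ c.head?, a = b) :
    dimq q (z ++ c) = dimq q z * qnum q (c.length + 1) := by
  simp [dimq, blocks_append h, blocks_of_isChain hne hc]

theorem isChain_append_singleton_iff {u : Word} {a : Bool} :
    (u ++ [a]).IsChain (· ≠ ·) ↔ u.IsChain (· ≠ ·) ∧ (u ≠ [] → u.getLast? = some (!a)) := by
  rcases List.eq_nil_or_concat u with rfl | ⟨l, b, rfl⟩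
  · simp
  · cases a <;> cases b <;> simp [List.isChain_append]

theorem bprefix_walt_succ (a : Bool) (n : ℕ) :
    bprefix (walt a) (n + 1) = a :: bprefix (walt (!a)) n := by
  simp only [bprefix, List.range_succ_eq_map, List.map_cons, List.map_map]
  congr 2
  funext m
  rcases Nat.mod_two_eq_zero_or_one m with h | h <;> simp [walt, Nat.succ_mod_two_eq_zero_iff, h]

theorem isChain_bprefix_walt (a : Bool) (n : ℕ) : (bprefix (walt a) n).IsChain (· ≠ ·) := by
  induction n generalizing a with
  | zero => simp [bprefix]
  | succ n ih =>
    rw [bprefix_walt_succ, List.isChain_cons]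
    refine ⟨?_, ih _⟩
    cases n
    · simp [bprefix]
    · simp [bprefix_walt_succ]

theorem isChain_append_bprefix_walt {u : Word} {a : Bool} (hu : (u ++ [a]).IsChain (· ≠ ·))
    (n : ℕ) : (u ++ bprefix (walt a) n).IsChain (· ≠ ·) := by
  cases n with
  | zero => simpa [bprefix] using hu.left_of_append
  | succ n =>
    rw [bprefix_walt_succ, ← List.singleton_append, ← List.append_assoc]
    exact hu.append_overlap (by simpa [bprefix_walt_succ] using isChain_bprefix_walt a (n + 1))
      (List.cons_ne_nil _ _)

theorem getLast?_eq_head?_of_maximal {x₀ x₁ : Word} {a : Bool}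
    (hx₁ : (x₁ ++ [a]).IsChain (· ≠ ·))
    (hmax : ∀ s : Word, s <:+ x₀ ++ x₁ → s.IsChain (· ≠ ·) →
      s.getLast? = some (!a) → s.length ≤ x₁.length) :
    ∀ b ∈ x₀.getLast?, ∀ c ∈ (x₁ ++ [a]).head?, b = c := by
  intro b hb c hc
  by_contra hbc
  obtain ⟨l, rfl⟩ := List.getLast?_eq_some_iff.mp hb
  have hchain : (b :: x₁ ++ [a]).IsChain (· ≠ ·) :=
    List.isChain_cons.mpr ⟨fun y hy => by rwa [Option.mem_unique hy hc], hx₁⟩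
  obtain ⟨hs, hlast⟩ := isChain_append_singleton_iff.mp hchain
  have hlen := hmax (b :: x₁) (by simp) hs (hlast (List.cons_ne_nil _ _))
  simp at hlen

theorem dimq_append_bprefix_walt (q : ℝ) {x₀ x₁ : Word} {a : Bool}
    (hx₁ : (x₁ ++ [a]).IsChain (· ≠ ·))
    (hmax : ∀ s : Word, s <:+ x₀ ++ x₁ → s.IsChain (· ≠ ·) →
      s.getLast? = some (!a) → s.length ≤ x₁.length)
    {n : ℕ} (hn : n ≠ 0) :
    dimq q (x₀ ++ x₁ ++ bprefix (walt a) n) = dimq q x₀ * qnum q (x₁.length + n + 1) := by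
  obtain ⟨n, rfl⟩ := Nat.exists_eq_succ_of_ne_zero hn
  have hhead : (x₁ ++ bprefix (walt a) (n + 1)).head? = (x₁ ++ [a]).head? := by
    cases x₁ <;> simp [bprefix_walt_succ]
  rw [List.append_assoc, dimq_append_of_isChain q (by simp [bprefix_walt_succ])
    (isChain_append_bprefix_walt hx₁ _) (hhead ▸ getLast?_eq_head?_of_maximal hx₁ hmax)]
  simp [bprefix, Nat.add_assoc]

section QuantumInteger

variable {q : ℝ}

theorem pow_mul_qnum (hq : q ≠ 0) (n : ℕ) :
    q ^ n * qnum q n = q * (1 - (q ^ 2) ^ n) / (1 - q ^ 2) := by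
  have hsub : q - q⁻¹ = -((1 - q ^ 2) / q) := by field_simp; ring
  by_cases h : 1 - q ^ 2 = 0
  · simp [qnum, hsub, h]
  · rw [qnum, hsub, inv_pow]
    field_simp
    ring

theorem tendsto_pow_mul_qnum (hq : q ≠ 0) (hq1 : |q| < 1) :
    Tendsto (fun n ↦ q ^ n * qnum q n) atTop (𝓝 (q / (1 - q ^ 2))) := by
  have hsq : |q ^ 2| < 1 := by rw [abs_pow, sq_lt_one_iff₀ (abs_nonneg q)]; exact hq1
  simp_rw [pow_mul_qnum hq]
  simpa using (((tendsto_const_nhds (x := (1 : ℝ))).sub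
    (tendsto_pow_atTop_nhds_zero_of_abs_lt_one hsq)).const_mul q).div_const (1 - q ^ 2)

theorem qnum_div_qnum (hq : q ≠ 0) (i j : ℕ) :
    qnum q i / qnum q j = q ^ ((j : ℤ) - i) * (q ^ i * qnum q i / (q ^ j * qnum q j)) := by
  rw [zpow_sub₀ hq, zpow_natCast, zpow_natCast, mul_div_mul_comm, ← mul_assoc]
  field_simp

theorem tendsto_qnum_div_qnum (hq : q ≠ 0) (hq1 : |q| < 1) (k l : ℕ) :
    Tendsto (fun n ↦ qnum q (k + n + 1) / qnum q (l + n + 1)) atTop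
      (𝓝 (q ^ ((l : ℤ) - k))) := by
  have hc : q / (1 - q ^ 2) ≠ 0 := by
    have : q ^ 2 < 1 := by rw [sq_lt_one_iff_abs_lt_one]; exact hq1
    exact div_ne_zero hq (by linarith)
  have hshift (m : ℕ) : Tendsto (fun n ↦ m + n + 1) atTop atTop :=
    tendsto_atTop_mono (fun n ↦ le_add_right (Nat.le_add_left n m)) tendsto_id
  have hlim := (((tendsto_pow_mul_qnum hq hq1).comp (hshift k)).div
    ((tendsto_pow_mul_qnum hq hq1).comp (hshift l)) hc).const_mul (q ^ ((l : ℤ) - k))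
  rw [div_self hc, mul_one] at hlim
  refine hlim.congr fun n ↦ ?_
  simp only [Pi.div_apply, Function.comp_apply]
  rw [qnum_div_qnum hq]
  congr 2
  push_cast
  ring

end QuantumInteger

theorem Dw_walt_eq {q : ℝ} (hq : q ≠ 0) (hq1 : |q| < 1) {a : Bool} {x₀ x₁ y₀ y₁ : Word}
    (hx₁ : (x₁ ++ [a]).IsChain (· ≠ ·))
    (hxmax : ∀ s : Word, s <:+ x₀ ++ x₁ → s.IsChain (· ≠ ·) →
      s.getLast? = some (!a) → s.length ≤ x₁.length)
    (hy₁ : (y₁ ++ [a]).IsChain (· ≠ ·))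
    (hymax : ∀ s : Word, s <:+ y₀ ++ y₁ → s.IsChain (· ≠ ·) →
      s.getLast? = some (!a) → s.length ≤ y₁.length) :
    Dw q (x₀ ++ x₁) (y₀ ++ y₁) (walt a) =
      dimq q x₀ / dimq q y₀ * q ^ ((y₁.length : ℤ) - x₁.length) := by
  refine Tendsto.limUnder_eq
    (((tendsto_qnum_div_qnum hq hq1 _ _).const_mul (dimq q x₀ / dimq q y₀)).congr' ?_)
  filter_upwards [eventually_ne_atTop 0] with n hn
  rw [dimq_append_bprefix_walt q hx₁ hxmax hn, dimq_append_bprefix_walt q hy₁ hymax hn,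
    mul_div_mul_comm]

/-- Write `x = x₀x₁` with `x₁` the longest alternating suffix of `x`
ending with `β` (`x₁ = ε` if none exists), and similarly `y = y₀y₁`.  Then
`D_{w_α}(x, y) = (dim_q(x₀)/dim_q(y₀))·q^{|y₁| - |x₁|}` for the strictly alternating
word `w_α = αβαβ⋯`, and the analogous statement (with the roles of `α = true` and
`β = false` interchanged) holds for `w_β = βαβα⋯`. -/
theorem Dw_at_alternating_word (q : ℝ) (hq0 : 0 < q) (hq1 : q < 1) :
    (∀ x₀ x₁ y₀ y₁ : Word,
      List.Chain' (· ≠ ·) x₁ → (x₁ ≠ [] → x₁.getLast? = some false) →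
      (∀ s : Word, s <:+ (x₀ ++ x₁) → List.Chain' (· ≠ ·) s →
        s.getLast? = some false → s.length ≤ x₁.length) →
      List.Chain' (· ≠ ·) y₁ → (y₁ ≠ [] → y₁.getLast? = some false) →
      (∀ s : Word, s <:+ (y₀ ++ y₁) → List.Chain' (· ≠ ·) s →
        s.getLast? = some false → s.length ≤ y₁.length) →
      Dw q (x₀ ++ x₁) (y₀ ++ y₁) (walt true) =
        (dimq q x₀ / dimq q y₀) * q ^ ((y₁.length : ℤ) - (x₁.length : ℤ))) ∧
    (∀ x₀ x₁ y₀ y₁ : Word,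
      List.Chain' (· ≠ ·) x₁ → (x₁ ≠ [] → x₁.getLast? = some true) →
      (∀ s : Word, s <:+ (x₀ ++ x₁) → List.Chain' (· ≠ ·) s →
        s.getLast? = some true → s.length ≤ x₁.length) →
      List.Chain' (· ≠ ·) y₁ → (y₁ ≠ [] → y₁.getLast? = some true) →
      (∀ s : Word, s <:+ (y₀ ++ y₁) → List.Chain' (· ≠ ·) s →
        s.getLast? = some true → s.length ≤ y₁.length) →
      Dw q (x₀ ++ x₁) (y₀ ++ y₁) (walt false) =
        (dimq q x₀ / dimq q y₀) * q ^ ((y₁.length : ℤ) - (x₁.length : ℤ))) := by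
  have hq1' : |q| < 1 := by rwa [abs_of_pos hq0]
  refine ⟨fun x₀ x₁ y₀ y₁ hx hxl hxmax hy hyl hymax ↦ ?_,
    fun x₀ x₁ y₀ y₁ hx hxl hxmax hy hyl hymax ↦ ?_⟩ <;>
  exact Dw_walt_eq hq0.ne' hq1' (isChain_append_singleton_iff.mpr ⟨hx, hxl⟩) hxmax
    (isChain_append_singleton_iff.mpr ⟨hy, hyl⟩) hymax
end
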